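/- Let a, b, c be interactions over act(P) ∪ fire(P) ∪ inhib(P) with firesup(a) = ∅, and let t be a causal interaction tree. Then the trees c → (a → (b → t)) and c → ((a ∪ b) → t) are equivalent: c → (a → (b → t)) ∼ c → ((a ∪ b) → t). (Soundness of the node push-down axiom.) -/

import Mathlib

/-!
An interaction `e` may be added to a set of interactions `γ` without changing any
composition as soon as `γ` contains some `e' ⊆ e` with the same firing support: `e'` fires
the same ports under weaker activation and inhibition conditions. Unfolding the semantics,
`‖c → (a → (b → t))‖` is `‖c → ((a ∪ b) → t)‖` together with `c ∪ a`, and since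
`firesup a = ∅` this extra interaction is dominated in this sense by `c`.
-/

/-- Typed ports: activation, firing and negative copies of the port set `P`. -/
inductive TPort (P : Type) : Type
  | act : P → TPort P
  | fire : P → TPort P
  | inhib : P → TPort P

/-- Firing support of an interaction. -/
def firesup {P : Type} (a : Set (TPort P)) : Set P := {p | TPort.fire p ∈ a}

/-- Activation support of an interaction. -/
def actsup {P : Type} (a : Set (TPort P)) : Set P := {p | TPort.act p ∈ a}

/-- Negative support of an interaction. -/
def negsup {P : Type} (a : Set (TPort P)) : Set P := {p | TPort.inhib p ∈ a}

/-- A behaviour: an LTS with an offer predicate; the transitions labelled by the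
empty interaction are exactly the self-loops, and every port occurring on a
transition from a state is offered in that state. -/
structure Behaviour (P : Type) : Type 1 where
  State : Type
  ports : Set P
  tr : State → Set P → State → Prop
  off : State → P → Prop
  tr_sub : ∀ {q a q'}, tr q a q' → a ⊆ ports
  tr_empty : ∀ q q', tr q ∅ q' ↔ q' = q
  off_of_tr : ∀ {q a q' p}, tr q a q' → p ∈ a → off q p

/-- Transition relation of the composition `γ(B₁,…,Bₙ)` (including the empty
self-loops, present in every behaviour by the standing assumption). -/
def compTr {P ι : Type} (B : ι → Behaviour P) (γ : Set (Set (TPort P)))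
    (q : ∀ i, (B i).State) (b : Set P) (q' : ∀ i, (B i).State) : Prop :=
  (b = ∅ ∧ q' = q) ∨
  ∃ a ∈ γ, b = firesup a ∧ ∀ i,
    (B i).tr (q i) (firesup a ∩ (B i).ports) (q' i) ∧
    (∀ p ∈ actsup a ∩ (B i).ports, (B i).off (q i) p) ∧
    (∀ p ∈ negsup a ∩ (B i).ports, ¬ (B i).off (q i) p)

/-- Offer predicate of the composition `γ(B₁,…,Bₙ)`. -/
def compOff {P ι : Type} (B : ι → Behaviour P)
    (q : ∀ i, (B i).State) (p : P) : Prop :=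
  ∃ i, p ∈ (B i).ports ∧ (B i).off (q i) p

/-- Two sets of interactions are equivalent iff they induce the same composed
behaviour on every finite family of behaviours whose port sets partition `P`. -/
def EquivInter (P : Type) (γ₁ γ₂ : Set (Set (TPort P))) : Prop :=
  ∀ (ι : Type) [Finite ι] (B : ι → Behaviour P),
    Pairwise (fun i j => Disjoint (B i).ports (B j).ports) →
    (⋃ i, (B i).ports) = Set.univ →
    compTr B γ₁ = compTr B γ₂

/-- Causal interaction trees over the typed ports of `P`
(`zero` is the constant 0; the constant 1 is the empty interaction `∅`). -/
inductive CITree (P : Type) : Type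
  | zero : CITree P
  | node : Set (TPort P) → CITree P
  | arrow : Set (TPort P) → CITree P → CITree P
  | par : CITree P → CITree P → CITree P

/-- Interaction semantics of causal interaction trees. -/
def sem {P : Type} : CITree P → Set (Set (TPort P))
  | CITree.zero => ∅
  | CITree.node a => {a}
  | CITree.arrow a t => {a} ∪ {c | ∃ b ∈ sem t, c = a ∪ b}
  | CITree.par t₁ t₂ =>
      sem t₁ ∪ sem t₂ ∪ {c | ∃ b₁ ∈ sem t₁, ∃ b₂ ∈ sem t₂, c = b₁ ∪ b₂}

/-- Equivalence of causal interaction trees. -/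
def treeEquiv {P : Type} (t₁ t₂ : CITree P) : Prop :=
  EquivInter P (sem t₁) (sem t₂)

lemma firesup_union {P : Type} (a b : Set (TPort P)) :
    firesup (a ∪ b) = firesup a ∪ firesup b :=
  rfl

section Composition

variable {P ι : Type} {B : ι → Behaviour P}

lemma compTr_of_forall_exists_subset {γ₁ γ₂ : Set (Set (TPort P))}
    (h : ∀ e ∈ γ₁, ∃ e' ∈ γ₂, e' ⊆ e ∧ firesup e' = firesup e)
    {q : ∀ i, (B i).State} {s : Set P} {q' : ∀ i, (B i).State} :
    compTr B γ₁ q s q' → compTr B γ₂ q s q' := by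
  rintro (hidle | ⟨e, he, rfl, hstep⟩)
  · exact Or.inl hidle
  obtain ⟨e', he', hsub, hfire⟩ := h e he
  refine Or.inr ⟨e', he', hfire.symm, fun i => ?_⟩
  obtain ⟨htr, hact, hneg⟩ := hstep i
  exact ⟨hfire ▸ htr, fun p hp => hact p ⟨hsub hp.1, hp.2⟩,
    fun p hp => hneg p ⟨hsub hp.1, hp.2⟩⟩

lemma compTr_insert_of_subset {γ : Set (Set (TPort P))} {e e' : Set (TPort P)}
    (he' : e' ∈ γ) (hsub : e' ⊆ e) (hfire : firesup e' = firesup e) :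
    compTr B (insert e γ) = compTr B γ := by
  funext q s q'
  refine propext ⟨compTr_of_forall_exists_subset ?_, compTr_of_forall_exists_subset ?_⟩
  · rintro f (rfl | hf)
    exacts [⟨e', he', hsub, hfire⟩, ⟨f, hf, subset_rfl, rfl⟩]
  · exact fun f hf => ⟨f, Set.mem_insert_of_mem e hf, subset_rfl, rfl⟩

end Composition

section Semantics

variable {P : Type}

lemma sem_arrow (a : Set (TPort P)) (t : CITree P) :
    sem (CITree.arrow a t) = insert a ((a ∪ ·) '' sem t) := by
  ext x
  simp only [sem, Set.singleton_union, Set.mem_insert_iff, Set.mem_ofPred_eq,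
    Set.mem_image]
  exact or_congr_right
    ⟨fun ⟨y, hy, hx⟩ => ⟨y, hy, hx.symm⟩, fun ⟨y, hy, hx⟩ => ⟨y, hy, hx.symm⟩⟩

lemma sem_arrow_arrow (a b : Set (TPort P)) (t : CITree P) :
    sem (CITree.arrow a (CITree.arrow b t)) = insert a (sem (CITree.arrow (a ∪ b) t)) := by
  simp only [sem_arrow, Set.image_insert_eq, Set.image_image, Set.union_assoc]

lemma sem_arrow_arrow_arrow (a b c : Set (TPort P)) (t : CITree P) :
    sem (CITree.arrow c (CITree.arrow a (CITree.arrow b t))) =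
      insert (c ∪ a) (sem (CITree.arrow c (CITree.arrow (a ∪ b) t))) := by
  rw [sem_arrow c, sem_arrow_arrow, Set.image_insert_eq, Set.insert_comm, ← sem_arrow]

end Semantics

/-- If `firesup a = ∅` then the trees `c → (a → (b → t))` and
`c → ((a ∪ b) → t)` are equivalent. (Soundness of the node push-down axiom.) -/
theorem stmt5 {P : Type} (a b c : Set (TPort P)) (ha : firesup a = ∅)
    (t : CITree P) :
    treeEquiv (CITree.arrow c (CITree.arrow a (CITree.arrow b t)))
      (CITree.arrow c (CITree.arrow (a ∪ b) t)) := by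
  intro ι _ B _ _
  rw [sem_arrow_arrow_arrow]
  have hfire : firesup c = firesup (c ∪ a) := by rw [firesup_union, ha, Set.union_empty]
  refine compTr_insert_of_subset ?_ Set.subset_union_left hfire
  rw [sem_arrow]
  exact Set.mem_insert c _
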